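/- Let q ≥ 2 be a prime power. In the GK function field over the algebraic closure of 𝔽_{q^6}, the period of the Weierstrass semigroup H(P₀, P_∞) at the places P₀ = (0,0,0) and P_∞ is q³+1. -/
import Mathlib


/-- An abstract algebraic function field of one variable, presented through the
discrete valuations `v P` attached to its places, together with its genus. -/
structure FnField where
  F : Type
  [fieldF : Field F]
  Place : Type
  /-- the (normalized discrete) valuation at each place -/
  v : Place → F → ℤ
  v_one : ∀ P, v P 1 = 0
  v_mul : ∀ P (x y : F), x ≠ 0 → y ≠ 0 → v P (x * y) = v P x + v P y
  v_add : ∀ P (x y : F), x ≠ 0 → y ≠ 0 → x + y ≠ 0 → min (v P x) (v P y) ≤ v P (x + y)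
  finite_supp : ∀ x : F, x ≠ 0 → {P | v P x ≠ 0}.Finite
  deg_zero : ∀ x : F, x ≠ 0 → ∀ s : Finset Place, {P | v P x ≠ 0} ⊆ s → ∑ P ∈ s, v P x = 0
  genus : ℕ
  /-- the number of gaps at any place equals the genus (Weierstrass gap theorem) -/
  genus_spec : ∀ P,
    {s : ℕ | ¬ ∃ x : F, x ≠ 0 ∧ v P x = -(s : ℤ) ∧ ∀ Q, Q ≠ P → 0 ≤ v Q x}.ncard = genus

attribute [instance] FnField.fieldF

namespace FnField

variable (C : FnField)

/-- `(s₁, s₂) ∈ H(P₁, P₂)`: there is a function with pole divisor `s₁P₁ + s₂P₂`. -/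
def Hpair (P1 P2 : C.Place) (s : ℕ × ℕ) : Prop :=
  ∃ x : C.F, x ≠ 0 ∧ C.v P1 x = -(s.1 : ℤ) ∧ C.v P2 x = -(s.2 : ℤ) ∧
    ∀ Q, Q ≠ P1 → Q ≠ P2 → 0 ≤ C.v Q x

/-- `s ∈ H(P)`: there is a function with pole divisor `sP`. -/
def Hone (P : C.Place) (s : ℕ) : Prop :=
  ∃ x : C.F, x ≠ 0 ∧ C.v P x = -(s : ℤ) ∧ ∀ Q, Q ≠ P → 0 ≤ C.v Q x

/-- `s` is a gap at `P`. -/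
def Gap (P : C.Place) (s : ℕ) : Prop := ¬ C.Hone P s

/-- `τ(β) = min {γ : (β, γ) ∈ H(P₁, P₂)}`. -/
noncomputable def tau (P1 P2 : C.Place) (β : ℕ) : ℕ := sInf {γ : ℕ | C.Hpair P1 P2 (β, γ)}

/-- `k (P₁ - P₂)` is a principal divisor. -/
def IsPrincipalDiff (P1 P2 : C.Place) (k : ℤ) : Prop :=
  ∃ x : C.F, x ≠ 0 ∧ C.v P1 x = k ∧ C.v P2 x = -k ∧ ∀ Q, Q ≠ P1 → Q ≠ P2 → C.v Q x = 0

/-- the period `π` of `H(P₁, P₂)`: the least `k > 0` with `k(P₁ - P₂)` principal. -/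
noncomputable def period (P1 P2 : C.Place) : ℕ := sInf {k : ℕ | 0 < k ∧ C.IsPrincipalDiff P1 P2 (k : ℤ)}

/-- the minimal generating set `Γ(P₁,P₂) = {(β, τ(β)) : β ∈ G(P₁)}`. -/
def GammaSet (P1 P2 : C.Place) : Set (ℕ × ℕ) :=
  {p | C.Gap P1 p.1 ∧ p.2 = C.tau P1 P2 p.1}

/-- `Γ_{k₁,k₂} = Γ(P₁,P₂) ∩ ((k₁π, (k₁+1)π] × (k₂π, (k₂+1)π])`. -/
def GammaPart (P1 P2 : C.Place) (k1 k2 : ℕ) : Set (ℕ × ℕ) :=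
  {p | p ∈ C.GammaSet P1 P2 ∧
    k1 * C.period P1 P2 < p.1 ∧ p.1 ≤ (k1 + 1) * C.period P1 P2 ∧
    k2 * C.period P1 P2 < p.2 ∧ p.2 ≤ (k2 + 1) * C.period P1 P2}

/-- `(s₁,s₂)` is a pure gap at `P₁,P₂`, i.e. `ℓ(s₁P₁+s₂P₂) = ℓ((s₁-1)P₁+(s₂-1)P₂)`,
formulated as: no function in `L(s₁P₁+s₂P₂)` attains the exact pole order `s₁` at `P₁`,
nor the exact pole order `s₂` at `P₂`. -/
def PureGap (P1 P2 : C.Place) (s : ℕ × ℕ) : Prop :=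
  (¬ ∃ x : C.F, x ≠ 0 ∧ C.v P1 x = -(s.1 : ℤ) ∧ -(s.2 : ℤ) ≤ C.v P2 x ∧
      ∀ Q, Q ≠ P1 → Q ≠ P2 → 0 ≤ C.v Q x) ∧
  (¬ ∃ x : C.F, x ≠ 0 ∧ C.v P2 x = -(s.2 : ℤ) ∧ -(s.1 : ℤ) ≤ C.v P1 x ∧
      ∀ Q, Q ≠ P1 → Q ≠ P2 → 0 ≤ C.v Q x)

/-- the pure gap set `G₀(P₁,P₂)`. -/
def PureGapSet (P1 P2 : C.Place) : Set (ℕ × ℕ) := {s | C.PureGap P1 P2 s}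

/-- `G_{k₁,k₂} = G₀(P₁,P₂) ∩ ((k₁π, (k₁+1)π] × (k₂π, (k₂+1)π])`. -/
def PureGapPart (P1 P2 : C.Place) (k1 k2 : ℕ) : Set (ℕ × ℕ) :=
  {p | p ∈ C.PureGapSet P1 P2 ∧
    k1 * C.period P1 P2 < p.1 ∧ p.1 ≤ (k1 + 1) * C.period P1 P2 ∧
    k2 * C.period P1 P2 < p.2 ∧ p.2 ≤ (k2 + 1) * C.period P1 P2}

end FnField

/-- componentwise minimum (greatest lower bound) on `ℕ × ℕ`. -/
def glb (u v : ℕ × ℕ) : ℕ × ℕ := (min u.1 v.1, min u.2 v.2)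

/-- `u ⋠ v` for the componentwise partial order on `ℕ × ℕ`. -/
def notPrec (u v : ℕ × ℕ) : Prop := v.1 < u.1 ∨ v.2 < u.2

namespace FnField

variable (C : FnField)

/-- `G¹_{k,0} = {glb(u,v) : u ∈ Γ_{k,k₂}, v ∈ Γ_{k₁,0}, k < k₁, 0 < k₂}`. -/
def G1part (P1 P2 : C.Place) (k : ℕ) : Set (ℕ × ℕ) :=
  {p | ∃ u v k1 k2, u ∈ C.GammaPart P1 P2 k k2 ∧ v ∈ C.GammaPart P1 P2 k1 0 ∧
    k < k1 ∧ 0 < k2 ∧ p = glb u v}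

/-- `G²_{k,0} = {glb(u,v) : u, v ∈ Γ_{k,0}, u ⋠ v, v ⋠ u}`. -/
def G2part (P1 P2 : C.Place) (k : ℕ) : Set (ℕ × ℕ) :=
  {p | ∃ u v, u ∈ C.GammaPart P1 P2 k 0 ∧ v ∈ C.GammaPart P1 P2 k 0 ∧
    notPrec u v ∧ notPrec v u ∧ p = glb u v}

/-- `G³_{k,0} = {glb(u,v) : u ∈ Γ_{k,0}, v ∈ Γ_{k₁,0}, u ⋠ v, k < k₁}`. -/
def G3part (P1 P2 : C.Place) (k : ℕ) : Set (ℕ × ℕ) :=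
  {p | ∃ u v k1, u ∈ C.GammaPart P1 P2 k 0 ∧ v ∈ C.GammaPart P1 P2 k1 0 ∧
    notPrec u v ∧ k < k1 ∧ p = glb u v}

/-- `G⁴_{k,0} = {glb(u,v) : u ∈ Γ_{k,k₂}, v ∈ Γ_{k,0}, v ⋠ u, 0 < k₂}`. -/
def G4part (P1 P2 : C.Place) (k : ℕ) : Set (ℕ × ℕ) :=
  {p | ∃ u v k2, u ∈ C.GammaPart P1 P2 k k2 ∧ v ∈ C.GammaPart P1 P2 k 0 ∧
    notPrec v u ∧ 0 < k2 ∧ p = glb u v}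

end FnField

/-- The Giulietti–Korchmáros function field over the algebraic closure of `𝔽_{q⁶}`,
presented through its defining equations and the standard facts about the places
`P₀ = (0,0,0)` and `P_∞` used in the paper. -/
structure GKData (q : ℕ) extends FnField where
  x : F
  y : F
  z : F
  P0 : Place
  Pinf : Place
  P0_ne_Pinf : P0 ≠ Pinf
  x_ne : x ≠ 0
  eq1 : y ^ (q + 1) = x ^ q + x
  eq2 : z ^ (q ^ 2 - q + 1) =
    y * ∑ i ∈ Finset.range (q + 1), (-1 : F) ^ (i + 1) * x ^ (i * (q - 1))
  /-- the principal divisor `(x) = (q³+1) P₀ - (q³+1) P_∞` -/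
  x_div_P0 : v P0 x = (q ^ 3 + 1 : ℤ)
  x_div_Pinf : v Pinf x = -((q : ℤ) ^ 3 + 1)
  x_div_other : ∀ Q, Q ≠ P0 → Q ≠ Pinf → v Q x = 0
  /-- `H(P_∞) = ⟨q³ - q² + q, q³, q³ + 1⟩` -/
  Hinf_gen : ∀ s : ℕ, FnField.Hone toFnField Pinf s ↔
    ∃ a b c : ℕ, s = a * (q ^ 3 - q ^ 2 + q) + b * q ^ 3 + c * (q ^ 3 + 1)
  /-- the genus is `(1/2)(q³+1)(q²-2) + 1` -/
  genus_eq : 2 * genus = (q ^ 3 + 1) * (q ^ 2 - 2) + 2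
  /-- the minimal generating set `Γ(P₀, P_∞)` (Castellanos–Tizziotti) -/
  gamma_desc : FnField.GammaSet toFnField P0 Pinf =
    {p : ℕ × ℕ | ∃ k i j : ℕ, 1 ≤ k ∧ k ≤ q ^ 2 - 1 ∧
      k - (q ^ 2 - q - 1) ≤ i ∧ i ≤ q ∧ k + 1 - i ≤ j ∧ j ≤ q ^ 2 - q ∧
      p = ((k - 1) * (q ^ 3 + 1) + (q + 1 - i) * (q ^ 2 - q + 1) - j,
           (i + j - (k + 1)) * (q ^ 3 + 1) + (q + 1 - i) * (q ^ 2 - q + 1) - j)}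

namespace FnField

variable (C : FnField)

lemma v_pow (P : C.Place) (x : C.F) (hx : x ≠ 0) (n : ℕ) :
    C.v P (x ^ n) = n * C.v P x := by
  induction n with
  | zero => simpa using C.v_one P
  | succ n ih =>
      rw [pow_succ, C.v_mul P _ _ (pow_ne_zero n hx) hx, ih]
      push_cast; ring

lemma v_inv (P : C.Place) (x : C.F) (hx : x ≠ 0) :
    C.v P x⁻¹ = - C.v P x := by
  have h := C.v_mul P x x⁻¹ hx (inv_ne_zero hx)
  rw [mul_inv_cancel₀ hx, C.v_one P] at h
  linarith

lemma v_zpow (P : C.Place) (x : C.F) (hx : x ≠ 0) (n : ℤ) :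
    C.v P (x ^ n) = n * C.v P x := by
  cases n with
  | ofNat m => simpa using C.v_pow P x hx m
  | negSucc m =>
      rw [zpow_negSucc, C.v_inv P _ (pow_ne_zero _ hx), C.v_pow P x hx, Int.negSucc_eq]
      push_cast; ring

end FnField

/-- For a prime power `q ≥ 2`, the period of the Weierstrass
semigroup `H(P₀, P_∞)` of the GK function field is `q³ + 1`. -/
theorem gk_period (q : ℕ) (hq : 2 ≤ q) (hpp : ∃ p n : ℕ, p.Prime ∧ 0 < n ∧ q = p ^ n)
    (C : GKData q) :
    C.toFnField.period C.P0 C.Pinf = q ^ 3 + 1 := by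
  set F := C.toFnField
  set N : ℕ := q ^ 3 + 1 with hN
  -- `q³+1` is a period via `x`
  have hmemN : N ∈ {k : ℕ | 0 < k ∧ F.IsPrincipalDiff C.P0 C.Pinf (k : ℤ)} := by
    refine ⟨by positivity, C.x, C.x_ne, ?_, ?_, C.x_div_other⟩
    · rw [C.x_div_P0]; push_cast [hN]; ring
    · rw [C.x_div_Pinf]; push_cast [hN]; ring
  -- every period is at least `q³+1`
  have hlow : ∀ k ∈ {k : ℕ | 0 < k ∧ F.IsPrincipalDiff C.P0 C.Pinf (k : ℤ)}, N ≤ k := by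
    rintro k ⟨hk0, x', hx'ne, hP0, hPinf, hoth⟩
    by_contra hlt
    push_neg at hlt
    -- d = gcd(k, N) is a positive "period" as well, via Bézout
    set d : ℕ := Nat.gcd k N with hd
    have hd0 : 0 < d := Nat.gcd_pos_of_pos_left _ hk0
    obtain ⟨a, b, hab⟩ : ∃ a b : ℤ, (d : ℤ) = a * k + b * N := by
      refine ⟨Int.gcdA k N, Int.gcdB k N, ?_⟩
      have := Int.gcd_eq_gcd_ab (k : ℤ) (N : ℤ)
      rw [Int.gcd_natCast_natCast] at this
      linarith
    set w : C.F := x' ^ a * C.x ^ b with hw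
    have hwne : w ≠ 0 := mul_ne_zero (zpow_ne_zero a hx'ne) (zpow_ne_zero b C.x_ne)
    have hvw : ∀ P : C.Place, F.v P w = a * F.v P x' + b * F.v P C.x := by
      intro P
      rw [hw, F.v_mul P _ _ (zpow_ne_zero a hx'ne) (zpow_ne_zero b C.x_ne),
        F.v_zpow P _ hx'ne, F.v_zpow P _ C.x_ne]
    -- `d ∈ H(P_∞)`
    have hdH : F.Hone C.Pinf d := by
      refine ⟨w, hwne, ?_, ?_⟩
      · rw [hvw, hPinf, C.x_div_Pinf]
        push_cast [hN] at hab ⊢; linarith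
      · intro Q hQ
        rcases eq_or_ne Q C.P0 with rfl | hQ0
        · rw [hvw, hP0, C.x_div_P0]
          push_cast [hN] at hab ⊢; linarith
        · rw [hvw, hoth Q hQ0 hQ, C.x_div_other Q hQ0 hQ]; simp
    rw [C.Hinf_gen] at hdH
    obtain ⟨a', b', c', habc⟩ := hdH
    -- `d` is a proper divisor of `N`, hence `2d ≤ N`
    have hdvd : d ∣ N := Nat.gcd_dvd_right k N
    have hdk : d ≤ k := Nat.le_of_dvd hk0 (Nat.gcd_dvd_left k N)
    have h2d : 2 * d ≤ N := by
      obtain ⟨t, ht⟩ := hdvd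
      have ht2 : 2 ≤ t := by
        rcases Nat.lt_or_ge t 2 with h | h
        · interval_cases t <;> omega
        · exact h
      calc 2 * d ≤ d * t := by nlinarith
        _ = N := ht.symm
    -- but every nonzero element of `H(P_∞)` is at least `q³ - q² + q`
    have hq2 : q ^ 2 ≤ q ^ 3 := Nat.pow_le_pow_right (by omega) (by omega)
    have hqq : q ^ 1 ≤ q ^ 2 := Nat.pow_le_pow_right (by omega) (by omega)
    rw [pow_one] at hqq
    have hdm : q ^ 3 - q ^ 2 + q ≤ d := by
      rcases Nat.eq_zero_or_pos a' with ha | ha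
      · rcases Nat.eq_zero_or_pos b' with hb | hb
        · rcases Nat.eq_zero_or_pos c' with hc | hc
          · subst ha; subst hb; subst hc; simp at habc; omega
          · have h5 : q ^ 3 + 1 ≤ c' * (q ^ 3 + 1) := Nat.le_mul_of_pos_left _ hc
            omega
        · have h5 : q ^ 3 ≤ b' * q ^ 3 := Nat.le_mul_of_pos_left _ hb
          omega
      · have h5 : q ^ 3 - q ^ 2 + q ≤ a' * (q ^ 3 - q ^ 2 + q) :=
          Nat.le_mul_of_pos_left _ ha
        omega
    -- contradiction: `2(q³ - q² + q) > q³ + 1` for `q ≥ 2`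
    have h3 : 2 * q ^ 2 ≤ q ^ 3 := by nlinarith
    omega
  have hne : {k : ℕ | 0 < k ∧ F.IsPrincipalDiff C.P0 C.Pinf (k : ℤ)}.Nonempty := ⟨N, hmemN⟩
  have h1 : F.period C.P0 C.Pinf ≤ N := Nat.sInf_le hmemN
  have h2 : N ≤ F.period C.P0 C.Pinf := hlow _ (Nat.sInf_mem hne)
  exact le_antisymm h1 h2
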